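/- arXiv:1301.5667 — 4 statements merged into one kernel-verified Lean document; each statement's English description precedes it below -/
import Mathlib

section
/- For every Lie algebra automorphism φ of g over k, the centralizer of φ(D) in g is the line spanned by φ(D): z_g(φ(D)) = k·φ(D). In particular, z_g(D) = k·D. -/
open Polynomial

set_option synthInstance.maxHeartbeats 1000000
set_option maxHeartbeats 1000000

/-- The truncated polynomial algebra `A = k[X]/(X^p)`. -/
noncomputable abbrev WittA (k : Type*) [Field k] (p : ℕ) : Type _ :=
  k[X] ⧸ Ideal.span ({X ^ p} : Set k[X])

/-- The coset of `X` in `A = k[X]/(X^p)`. -/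
noncomputable abbrev WittX (k : Type*) [Field k] (p : ℕ) : WittA k p :=
  Ideal.Quotient.mk (Ideal.span ({X ^ p} : Set k[X])) X

/-!
Evaluating `⁅D, E⁆ = 0` at `X` gives `D (E X) = 0`. Since `D` acts on `k[X]/(X^p)` as `d/dX`, and a
polynomial of degree `< p` with zero derivative is constant in characteristic `p`, `E X = c` is a
scalar; a derivation is determined by its value on `X`, so `E = c • D`. The statement for `φ D`
follows by transporting along `φ`.
-/

namespace Polynomial

theorem eq_C_coeff_zero_of_derivative_eq_zero {R : Type*} [CommRing R] [NoZeroDivisors R]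
    {p : ℕ} [CharP R p] (hp : p ≠ 0) {f : R[X]} (hdeg : f.natDegree < p)
    (hf : derivative f = 0) : f = C (f.coeff 0) := by
  ext n
  rcases Nat.eq_zero_or_pos n with rfl | hn
  · simp
  rw [coeff_C, if_neg hn.ne']
  rcases lt_or_ge n p with hnp | hpn
  · conv_lhs => rw [← expand_contract p hf hp]
    rw [coeff_expand hp.bot_lt, if_neg (Nat.not_dvd_of_pos_of_lt hn hnp)]
  · exact coeff_eq_zero_of_natDegree_lt (hdeg.trans_le hpn)

end Polynomial

namespace AdjoinRoot

section CommRing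

variable {R : Type*} [CommRing R] {f : R[X]}

theorem derivation_ext {M : Type*} [AddCommGroup M] [Module (AdjoinRoot f) M] [Module R M]
    [IsScalarTower R (AdjoinRoot f) M] {D₁ D₂ : Derivation R (AdjoinRoot f) M}
    (h : D₁ (root f) = D₂ (root f)) : D₁ = D₂ :=
  Derivation.ext_of_adjoin_eq_top _ adjoinRoot_eq_top (Set.eqOn_singleton.mpr h)

theorem derivation_mk {D : Derivation R (AdjoinRoot f) (AdjoinRoot f)} (hD : D (root f) = 1)
    (g : R[X]) : D (mk f g) = mk f (derivative g) := by
  rw [← aeval_eq, D.map_aeval, hD, aeval_eq, smul_eq_mul, mul_one]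

end CommRing

variable {k : Type*} [Field k] {p : ℕ} [CharP k p]

theorem mem_bot_of_derivation_apply_eq_zero (hp : p ≠ 0)
    {D : Derivation k (AdjoinRoot (X ^ p : k[X])) (AdjoinRoot (X ^ p : k[X]))}
    (hD : D (root (X ^ p)) = 1) {a : AdjoinRoot (X ^ p : k[X])} (ha : D a = 0) :
    a ∈ (⊥ : Subalgebra k (AdjoinRoot (X ^ p : k[X]))) := by
  obtain ⟨g, rfl⟩ := mk_surjective a
  set r := g %ₘ X ^ p
  have hmk : mk (X ^ p) r = mk (X ^ p) g := mk_leftInverse (monic_X_pow p) (mk _ g)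
  have hdeg : r.natDegree < p := by
    simpa using natDegree_modByMonic_lt g (monic_X_pow p)
      fun h => hp (by simpa using congrArg natDegree h)
  have hdvd : X ^ p ∣ derivative r := by
    rwa [← mk_eq_zero, ← derivation_mk hD, hmk]
  have hr : derivative r = 0 := by
    refine eq_zero_of_dvd_of_degree_lt hdvd ((degree_le_natDegree).trans_lt ?_)
    rw [degree_X_pow, Nat.cast_lt]
    exact (natDegree_derivative_le r).trans_lt (by omega)
  refine Algebra.mem_bot.mpr ⟨r.coeff 0, ?_⟩
  rw [← hmk, algebraMap_eq, ← mk_C]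
  exact congrArg _ (eq_C_coeff_zero_of_derivative_eq_zero hp hdeg hr).symm

theorem lie_eq_zero_iff_exists_eq_smul (hp : p ≠ 0)
    {D : Derivation k (AdjoinRoot (X ^ p : k[X])) (AdjoinRoot (X ^ p : k[X]))}
    (hD : D (root (X ^ p)) = 1)
    (E : Derivation k (AdjoinRoot (X ^ p : k[X])) (AdjoinRoot (X ^ p : k[X]))) :
    ⁅D, E⁆ = 0 ↔ ∃ c : k, E = c • D := by
  refine ⟨fun h => ?_, ?_⟩
  · have hE : D (E (root _)) = 0 := by
      simpa [Derivation.commutator_apply, hD] using congr($h (root _))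
    obtain ⟨c, hc⟩ := Algebra.mem_bot.mp (mem_bot_of_derivation_apply_eq_zero hp hD hE)
    refine ⟨c, derivation_ext ?_⟩
    rw [← hc, Derivation.smul_apply, hD, Algebra.algebraMap_eq_smul_one]
  · rintro ⟨c, rfl⟩
    exact (lie_smul c D D).trans (by rw [lie_self, smul_zero])

end AdjoinRoot

theorem LieEquiv.centralizer_apply_eq_line {R L L' : Type*} [CommRing R] [LieRing L]
    [LieAlgebra R L] [LieRing L'] [LieAlgebra R L'] (φ : L ≃ₗ⁅R⁆ L') {x : L}
    (hx : {y | ⁅x, y⁆ = 0} = {y | ∃ a : R, y = a • x}) :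
    {y | ⁅φ x, y⁆ = 0} = {y | ∃ a : R, y = a • φ x} := by
  ext y
  rw [Set.mem_ofPred_eq, Set.mem_ofPred_eq, ← φ.apply_symm_apply y, ← LieEquiv.map_lie,
    map_eq_zero_iff φ φ.injective]
  simp only [← map_smul, EmbeddingLike.apply_eq_iff_eq]
  exact Set.ext_iff.mp hx (φ.symm y)

theorem witt_centralizer_of_orbit_of_D_general (p : ℕ) (hp : p.Prime)
    (k : Type*) [Field k] [CharP k p]
    (D : Derivation k (WittA k p) (WittA k p)) (hD : D (WittX k p) = 1) :
    (∀ φ : Derivation k (WittA k p) (WittA k p) ≃ₗ⁅k⁆ Derivation k (WittA k p) (WittA k p),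
      {y : Derivation k (WittA k p) (WittA k p) | ⁅φ D, y⁆ = 0} =
        {y : Derivation k (WittA k p) (WittA k p) | ∃ a : k, y = a • φ D}) ∧
    {y : Derivation k (WittA k p) (WittA k p) | ⁅D, y⁆ = 0} =
      {y : Derivation k (WittA k p) (WittA k p) | ∃ a : k, y = a • D} := by
  -- `WittA k p` is `AdjoinRoot (X ^ p)` by definition, with `WittX k p` as its root.
  have hcent : {y | ⁅D, y⁆ = 0} = {y | ∃ a : k, y = a • D} :=
    Set.ext (AdjoinRoot.lie_eq_zero_iff_exists_eq_smul hp.ne_zero hD)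
  exact ⟨fun φ => φ.centralizer_apply_eq_line hcent, hcent⟩

/-- For every Lie algebra automorphism `φ` of the Witt algebra `g = Der_k(A)`, the centralizer
of `φ(D)` in `g` is the line `k·φ(D)`; in particular `z_g(D) = k·D`. -/
theorem witt_centralizer_of_orbit_of_D (p : ℕ) (hp : p.Prime) (hp3 : 3 < p)
    (k : Type*) [Field k] [IsAlgClosed k] [CharP k p]
    (D : Derivation k (WittA k p) (WittA k p)) (hD : D (WittX k p) = 1) :
    (∀ φ : Derivation k (WittA k p) (WittA k p) ≃ₗ⁅k⁆ Derivation k (WittA k p) (WittA k p),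
      {y : Derivation k (WittA k p) (WittA k p) | ⁅φ D, y⁆ = 0} =
        {y : Derivation k (WittA k p) (WittA k p) | ∃ a : k, y = a • φ D}) ∧
    {y : Derivation k (WittA k p) (WittA k p) | ⁅D, y⁆ = 0} =
      {y : Derivation k (WittA k p) (WittA k p) | ∃ a : k, y = a • D} :=
  witt_centralizer_of_orbit_of_D_general p hp k D hD
end

section
/- Let i be an integer with 1 ≤ i < (p-1)/2 and let x ∈ g_i \ g_{i+1}. Then the centralizer of x in g is z_g(x) = k·x ⊕ g_{p-1-i}; that is, z_g(x) = {a•x + z : a ∈ k, z ∈ g_{p-1-i}}, and this sum is direct (k·x ∩ g_{p-1-i} = 0). -/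
open Polynomial

set_option synthInstance.maxHeartbeats 1000000
set_option maxHeartbeats 1000000

/-!
A derivation of `k[X]/(X^p)` is determined by its value at `X`, and on these values the bracket
is the Wronskian: if `d₁ X = f` and `d₂ X = g` then `⁅d₁, d₂⁆ X = f g' - f' g`. For
`f = X^(i+1) u` with `u(0) ≠ 0` and `g = X^n v`, the coefficient of `X^(i+n)` in `f g' - f' g` is
`(n - i - 1) u(0) v(0)`, and `n - i - 1` is nonzero in `k` for `n < p`, `n ≠ i + 1`. So if `x` and
`y` commute, then after subtracting from `y` the multiple of `x` that clears the coefficient of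
`X^(i+1)` in `y X`, the value at `X` picks up one more factor of `X` at every step
`n < p - i`. Conversely, `X^(i+1) ∣ f` and `X^(p-i) ∣ g` already give `X^p ∣ f g' - f' g`.
-/

namespace Polynomial

variable {R : Type*} [CommRing R]

theorem X_pow_succ_dvd_iff {f : R[X]} {n : ℕ} :
    X ^ (n + 1) ∣ f ↔ X ^ n ∣ f ∧ f.coeff n = 0 := by
  simp only [X_pow_dvd_iff, Nat.lt_succ_iff_lt_or_eq, or_imp, forall_and, forall_eq]

theorem wronskian_X_pow_succ_mul_X_pow_mul (m n : ℕ) (u v : R[X]) :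
    wronskian (X ^ (m + 1) * u) (X ^ n * v) =
      C ((n : R) - (m + 1)) * X ^ (m + n) * (u * v) + X ^ (m + n + 1) * wronskian u v := by
  rcases n with _ | n
  all_goals
    simp only [wronskian, derivative_mul, derivative_X_pow, Nat.add_sub_cancel, map_sub, map_add,
      map_one, map_natCast, Nat.cast_add, Nat.cast_one, Nat.cast_zero, map_zero]
    ring

theorem coeff_wronskian_X_pow_succ_mul_X_pow_mul (m n : ℕ) (u v : R[X]) :
    (wronskian (X ^ (m + 1) * u) (X ^ n * v)).coeff (m + n) =
      ((n : R) - (m + 1)) * (u.coeff 0 * v.coeff 0) := by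
  rw [wronskian_X_pow_succ_mul_X_pow_mul, coeff_add, mul_assoc, coeff_C_mul,
    coeff_X_pow_mul', if_pos le_rfl, Nat.sub_self, mul_coeff_zero, coeff_X_pow_mul',
    if_neg (by omega), add_zero]

theorem X_pow_add_dvd_wronskian {a b : R[X]} {m n : ℕ} (ha : X ^ (m + 1) ∣ a)
    (hb : X ^ n ∣ b) : X ^ (m + n) ∣ wronskian a b := by
  obtain ⟨u, rfl⟩ := ha
  obtain ⟨v, rfl⟩ := hb
  rw [wronskian_X_pow_succ_mul_X_pow_mul, pow_succ, mul_assoc _ X, mul_assoc (C _)]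
  exact dvd_add (dvd_mul_of_dvd_right (dvd_mul_right _ _) _) (dvd_mul_right _ _)

variable [IsDomain R] {p : ℕ} [CharP R p]

theorem X_pow_succ_dvd_of_coeff_wronskian_eq_zero {a b : R[X]} {m n : ℕ}
    (ha : X ^ (m + 1) ∣ a) (ha' : a.coeff (m + 1) ≠ 0) (hb : X ^ n ∣ b)
    (hw : (wronskian a b).coeff (m + n) = 0) (hnm : n ≠ m + 1) (hn : n < p) (hm : m + 1 < p) :
    X ^ (n + 1) ∣ b := by
  refine X_pow_succ_dvd_iff.2 ⟨hb, ?_⟩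
  obtain ⟨u, rfl⟩ := ha
  obtain ⟨v, rfl⟩ := hb
  rw [coeff_X_pow_mul', if_pos le_rfl, Nat.sub_self] at ha' ⊢
  rw [coeff_wronskian_X_pow_succ_mul_X_pow_mul] at hw
  have hnm' : (n : R) - (m + 1) ≠ 0 := by
    rw [sub_ne_zero, ← Nat.cast_succ]
    exact fun h => hnm ((CharP.natCast_eq_natCast R p).1 h |>.eq_of_lt_of_lt hn hm)
  simpa [hnm', ha'] using hw

theorem X_pow_dvd_of_X_pow_dvd_wronskian {a b : R[X]} {m : ℕ}
    (ha : X ^ (m + 1) ∣ a) (ha' : a.coeff (m + 1) ≠ 0) (hb : b.coeff (m + 1) = 0)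
    (hm : m + 1 < p) (hw : X ^ p ∣ wronskian a b) : X ^ (p - m) ∣ b := by
  suffices ∀ n ≤ p - m, X ^ n ∣ b from this _ le_rfl
  intro n hn
  induction n with
  | zero => exact one_dvd b
  | succ n ih =>
    have hbn := ih (by omega)
    by_cases hnm : n = m + 1
    · subst hnm
      exact X_pow_succ_dvd_iff.2 ⟨hbn, hb⟩
    · exact X_pow_succ_dvd_of_coeff_wronskian_eq_zero ha ha' hbn
        (X_pow_dvd_iff.1 hw _ (by omega)) hnm (by omega) hm

end Polynomial

namespace Derivation

theorem commutator_smul_self_add {R A : Type*} [CommRing R] [CommRing A] [Algebra R A]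
    (d₁ d₂ : Derivation R A A) (a : R) : ⁅d₁, a • d₁ + d₂⁆ = ⁅d₁, d₂⁆ := by
  ext b
  simp only [commutator_apply, add_apply, smul_apply, map_add, map_smul]
  abel

variable {R : Type*} [CommRing R] {I : Ideal R[X]}

theorem apply_quotient_mk {M : Type*} [AddCommGroup M] [Module (R[X] ⧸ I) M] [Module R M]
    [IsScalarTower R (R[X] ⧸ I) M] (d : Derivation R (R[X] ⧸ I) M) (q : R[X]) :
    d (Ideal.Quotient.mk I q) =
      Ideal.Quotient.mk I (derivative q) • d (Ideal.Quotient.mk I X) := by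
  have h (q : R[X]) : Ideal.Quotient.mk I q = aeval (Ideal.Quotient.mk I X) q := by
    rw [← Ideal.Quotient.mkₐ_eq_mk R, aeval_algHom_apply, aeval_X_left_apply]
  simpa only [← h] using d.comp_aeval_eq (Ideal.Quotient.mk I X) q

theorem eq_of_apply_quotient_mk_X {d₁ d₂ : Derivation R (R[X] ⧸ I) (R[X] ⧸ I)}
    (h : d₁ (Ideal.Quotient.mk I X) = d₂ (Ideal.Quotient.mk I X)) : d₁ = d₂ := by
  ext b
  obtain ⟨q, rfl⟩ := Ideal.Quotient.mk_surjective b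
  rw [apply_quotient_mk d₁, apply_quotient_mk d₂, h]

theorem commutator_apply_quotient_mk_X {d₁ d₂ : Derivation R (R[X] ⧸ I) (R[X] ⧸ I)}
    {f g : R[X]}
    (hf : d₁ (Ideal.Quotient.mk I X) = Ideal.Quotient.mk I f)
    (hg : d₂ (Ideal.Quotient.mk I X) = Ideal.Quotient.mk I g) :
    ⁅d₁, d₂⁆ (Ideal.Quotient.mk I X) = Ideal.Quotient.mk I (wronskian f g) := by
  rw [commutator_apply, hf, hg, apply_quotient_mk d₁, apply_quotient_mk d₂, hf, hg, smul_eq_mul,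
    smul_eq_mul, ← map_mul, ← map_mul, ← map_sub, wronskian, mul_comm f]

theorem commutator_eq_zero_iff {d₁ d₂ : Derivation R (R[X] ⧸ I) (R[X] ⧸ I)} {f g : R[X]}
    (hf : d₁ (Ideal.Quotient.mk I X) = Ideal.Quotient.mk I f)
    (hg : d₂ (Ideal.Quotient.mk I X) = Ideal.Quotient.mk I g) :
    ⁅d₁, d₂⁆ = 0 ↔ wronskian f g ∈ I := by
  rw [← Ideal.Quotient.eq_zero_iff_mem, ← commutator_apply_quotient_mk_X hf hg]
  exact ⟨fun h => h ▸ rfl, fun h => eq_of_apply_quotient_mk_X (h.trans (zero_apply _).symm)⟩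

end Derivation

namespace WittA

variable {k : Type*} [Field k] {p : ℕ}

theorem mk_mem_span_X_pow_iff {m : ℕ} (hm : m ≤ p) {q : k[X]} :
    Ideal.Quotient.mk _ q ∈ Ideal.span {WittX k p ^ m} ↔ X ^ m ∣ q := by
  have hspan : Ideal.span {WittX k p ^ m} = (Ideal.span {X ^ m}).map (Ideal.Quotient.mk _) := by
    rw [Ideal.map_span, Set.image_singleton, map_pow]
  rw [hspan, Ideal.mem_quotient_iff_mem
    (Ideal.span_singleton_le_span_singleton.2 (pow_dvd_pow X hm)), Ideal.mem_span_singleton]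

theorem smul_mk (a : k) (q : k[X]) :
    a • (Ideal.Quotient.mk _ q : WittA k p) = Ideal.Quotient.mk _ (C a * q) := by
  rw [← smul_eq_C_mul, ← Ideal.Quotient.mkₐ_eq_mk k, map_smul]

theorem exists_mk_eq_of_mem_span_X_pow {m : ℕ} (hm : m + 1 ≤ p) {u : WittA k p}
    (h₁ : u ∈ Ideal.span {WittX k p ^ m}) (h₂ : u ∉ Ideal.span {WittX k p ^ (m + 1)}) :
    ∃ f : k[X], u = Ideal.Quotient.mk _ f ∧ X ^ m ∣ f ∧ f.coeff m ≠ 0 := by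
  obtain ⟨f, rfl⟩ := Ideal.Quotient.mk_surjective u
  rw [mk_mem_span_X_pow_iff (by omega)] at h₁
  rw [mk_mem_span_X_pow_iff hm, X_pow_succ_dvd_iff] at h₂
  exact ⟨f, rfl, h₁, fun hc => h₂ ⟨h₁, hc⟩⟩

variable {i : ℕ} {x : Derivation k (WittA k p) (WittA k p)} {f : k[X]}

theorem smul_eq_zero_of_apply_mem_span (hi : 2 * i + 1 < p)
    (hxf : x (WittX k p) = Ideal.Quotient.mk _ f) (hfc : f.coeff (i + 1) ≠ 0) (a : k)
    (ha : (a • x) (WittX k p) ∈ Ideal.span {WittX k p ^ (p - i)}) : a • x = 0 := by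
  rw [Derivation.smul_apply, hxf, smul_mk, mk_mem_span_X_pow_iff (Nat.sub_le p i)] at ha
  have hcoeff := X_pow_dvd_iff.1 ha (i + 1) (by omega)
  rw [coeff_C_mul] at hcoeff
  rw [(mul_eq_zero.1 hcoeff).resolve_right hfc, zero_smul]

theorem commutator_smul_add_eq_zero (hip : i ≤ p) (hxf : x (WittX k p) = Ideal.Quotient.mk _ f)
    (hf : X ^ (i + 1) ∣ f) (a : k) {z : Derivation k (WittA k p) (WittA k p)}
    (hz : z (WittX k p) ∈ Ideal.span {WittX k p ^ (p - i)}) : ⁅x, a • x + z⁆ = 0 := by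
  obtain ⟨h, hzh⟩ := Ideal.Quotient.mk_surjective (z (WittX k p))
  rw [← hzh, mk_mem_span_X_pow_iff (Nat.sub_le p i)] at hz
  rw [Derivation.commutator_smul_self_add, Derivation.commutator_eq_zero_iff hxf hzh.symm,
    Ideal.mem_span_singleton]
  have hw := X_pow_add_dvd_wronskian hf hz
  rwa [Nat.add_sub_cancel' hip] at hw

theorem exists_eq_smul_add_of_commutator_eq_zero [CharP k p] (hip : i + 1 < p)
    (hxf : x (WittX k p) = Ideal.Quotient.mk _ f) (hf : X ^ (i + 1) ∣ f)
    (hfc : f.coeff (i + 1) ≠ 0) {y : Derivation k (WittA k p) (WittA k p)} (hy : ⁅x, y⁆ = 0) :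
    ∃ (a : k) (z : Derivation k (WittA k p) (WittA k p)),
      z (WittX k p) ∈ Ideal.span {WittX k p ^ (p - i)} ∧ y = a • x + z := by
  obtain ⟨g, hyg⟩ := Ideal.Quotient.mk_surjective (y (WittX k p))
  set a := g.coeff (i + 1) / f.coeff (i + 1)
  refine ⟨a, y - a • x, ?_, by abel⟩
  have hz : (y - a • x) (WittX k p) = Ideal.Quotient.mk _ (g - C a * f) := by
    rw [Derivation.sub_apply, Derivation.smul_apply, hxf, smul_mk, ← hyg, map_sub]
  rw [hz, mk_mem_span_X_pow_iff (Nat.sub_le p i)]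
  refine X_pow_dvd_of_X_pow_dvd_wronskian hf hfc ?_ hip ?_
  · rw [coeff_sub, coeff_C_mul, div_mul_cancel₀ _ hfc, sub_self]
  · have hw : wronskian f (g - C a * f) = wronskian f g := by
      simp only [wronskian, derivative_sub, derivative_C_mul]
      ring
    rw [hw, ← Ideal.mem_span_singleton, ← Derivation.commutator_eq_zero_iff hxf hyg.symm]
    exact hy

end WittA

theorem witt_centralizer_small_filtration_general (p : ℕ)
    (k : Type*) [Field k] [CharP k p]
    (i : ℕ) (hi2 : 2 * i < p - 1)
    (x : Derivation k (WittA k p) (WittA k p))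
    (hx1 : x (WittX k p) ∈ Ideal.span {WittX k p ^ (i + 1)})
    (hx2 : x (WittX k p) ∉ Ideal.span {WittX k p ^ (i + 2)}) :
    ({y : Derivation k (WittA k p) (WittA k p) | ⁅x, y⁆ = 0} =
      {y : Derivation k (WittA k p) (WittA k p) |
        ∃ (a : k) (z : Derivation k (WittA k p) (WittA k p)),
          z (WittX k p) ∈ Ideal.span {WittX k p ^ (p - i)} ∧ y = a • x + z}) ∧
    (∀ a : k, (a • x) (WittX k p) ∈ Ideal.span {WittX k p ^ (p - i)} → a • x = 0) := by
  obtain ⟨f, hxf, hf, hfc⟩ := WittA.exists_mk_eq_of_mem_span_X_pow (by omega) hx1 hx2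
  refine ⟨Set.ext fun y =>
      ⟨WittA.exists_eq_smul_add_of_commutator_eq_zero (by omega) hxf hf hfc, ?_⟩,
    WittA.smul_eq_zero_of_apply_mem_span (by omega) hxf hfc⟩
  rintro ⟨a, z, hz, rfl⟩
  exact WittA.commutator_smul_add_eq_zero (by omega) hxf hf a hz

/-- For `1 ≤ i < (p-1)/2` and `x ∈ g_i \ g_{i+1}`, the centralizer of `x` in the Witt algebra
`g = Der_k(A)` is `z_g(x) = k·x ⊕ g_{p-1-i}`: every centralizing element is of the form
`a • x + z` with `z ∈ g_{p-1-i}`, and the sum is direct (`k·x ∩ g_{p-1-i} = 0`).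
Here `g_j = {d : d(X) ∈ X^{j+1}·A}`, so `g_{p-1-i} = {d : d(X) ∈ X^{p-i}·A}`. -/
theorem witt_centralizer_small_filtration (p : ℕ) (hp : p.Prime) (hp3 : 3 < p)
    (k : Type*) [Field k] [IsAlgClosed k] [CharP k p]
    (i : ℕ) (hi1 : 1 ≤ i) (hi2 : 2 * i < p - 1)
    (x : Derivation k (WittA k p) (WittA k p))
    (hx1 : x (WittX k p) ∈ Ideal.span {WittX k p ^ (i + 1)})
    (hx2 : x (WittX k p) ∉ Ideal.span {WittX k p ^ (i + 2)}) :
    ({y : Derivation k (WittA k p) (WittA k p) | ⁅x, y⁆ = 0} =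
      {y : Derivation k (WittA k p) (WittA k p) |
        ∃ (a : k) (z : Derivation k (WittA k p) (WittA k p)),
          z (WittX k p) ∈ Ideal.span {WittX k p ^ (p - i)} ∧ y = a • x + z}) ∧
    (∀ a : k, (a • x) (WittX k p) ∈ Ideal.span {WittX k p ^ (p - i)} → a • x = 0) :=
  witt_centralizer_small_filtration_general p k i hi2 x hx1 hx2
end

section
/- For every nonzero x ∈ g_1, the centralizer of x in g is contained in g_1; consequently the centralizer of x in g_1 coincides with its centralizer in g: z_{g_1}(x) = z_g(x). -/
/-!
A derivation of `A = k[X]/(X^p)` is determined by its value at `X`, and if `x(X) = F`,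
`y(X) = G` then `⁅x, y⁆(X) = F G' - G F'` modulo `X^p`. For `0 ≠ x ∈ g_1` take `F ≠ 0` of degree
`< p`, so `F = X^m u` with `u(0) ≠ 0` and `2 ≤ m < p`. If `y ∉ g_1`, then `G = X^j v` with
`v(0) ≠ 0` and `j < 2`, and the lowest term of the Wronskian `F G' - G F'` is
`(j - m) u(0) v(0) X^(m+j-1)`. Its degree is `< p` and `j ≢ m (mod p)`, so `⁅x, y⁆ ≠ 0`.
-/

open Polynomial

set_option synthInstance.maxHeartbeats 1000000
set_option maxHeartbeats 1000000

namespace Polynomial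

variable {R : Type*} [CommRing R]

theorem X_mul_derivative_X_pow (n : ℕ) :
    X * derivative (X ^ n : R[X]) = C (n : R) * X ^ n := by
  rcases n with _ | n
  · simp
  · rw [derivative_X_pow, Nat.add_sub_cancel]; ring

-- The factor `X` avoids the exponent `j - 1`, truncated at `j = 0`.
theorem X_mul_wronskian_X_pow_mul (m j : ℕ) (u v : R[X]) :
    X * wronskian (X ^ m * u) (X ^ j * v) =
      X ^ (m + j) * (C ((j : R) - m) * u * v + X * wronskian u v) := by
  simp only [wronskian, derivative_mul, C_sub]
  linear_combination (X ^ m * u * v) * X_mul_derivative_X_pow (R := R) j -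
    (X ^ j * u * v) * X_mul_derivative_X_pow (R := R) m

theorem X_dvd_of_X_pow_dvd_wronskian [IsDomain R] {p m j : ℕ} {u v : R[X]} (hmj : m + j ≤ p)
    (h : X ^ p ∣ wronskian (X ^ m * u) (X ^ j * v)) :
    X ∣ C ((j : R) - m) * u * v := by
  have h' := mul_dvd_mul_left X ((pow_dvd_pow X hmj).trans h)
  rw [X_mul_wronskian_X_pow_mul, mul_comm] at h'
  exact (dvd_add_left (dvd_mul_right _ _)).mp
    ((mul_dvd_mul_iff_left (pow_ne_zero _ X_ne_zero)).mp h')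

theorem X_sq_dvd_of_X_pow_dvd_wronskian {k : Type*} [Field k] {p : ℕ} [CharP k p] {F G : k[X]}
    (hF : F ≠ 0) (hFp : F.natDegree < p) (hF2 : X ^ 2 ∣ F) (hW : X ^ p ∣ wronskian F G) :
    X ^ 2 ∣ G := by
  by_contra hG
  have hG0 : G ≠ 0 := by rintro rfl; exact hG (dvd_zero _)
  obtain ⟨u, hFu, hu⟩ := F.exists_eq_pow_rootMultiplicity_mul_and_not_dvd hF 0
  obtain ⟨v, hGv, hv⟩ := G.exists_eq_pow_rootMultiplicity_mul_and_not_dvd hG0 0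
  simp only [map_zero, sub_zero] at hFu hu hGv hv
  set m := F.rootMultiplicity 0
  set j := G.rootMultiplicity 0
  have hm2 : 2 ≤ m := (le_rootMultiplicity_iff hF).mpr (by simpa using hF2)
  have hj2 : j < 2 := by
    by_contra! h
    exact hG (by simpa using (le_rootMultiplicity_iff hG0).mp h)
  have hmp : m < p := by
    simpa using (natDegree_le_of_dvd ⟨u, hFu⟩ hF).trans_lt hFp
  rw [hFu, hGv] at hW
  have hX := X_dvd_of_X_pow_dvd_wronskian (by omega) hW
  simp only [prime_X.dvd_mul, hu, hv, or_false, X_dvd_iff, coeff_C_zero, sub_eq_zero,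
    CharP.natCast_eq_natCast k p, Nat.ModEq, Nat.mod_eq_of_lt hmp,
    Nat.mod_eq_of_lt (by omega : j < p)] at hX
  omega

end Polynomial

section WittAlgebra

variable {k : Type*} [Field k] {p : ℕ}

local notation "π" => Ideal.Quotient.mkₐ k (Ideal.span ({X ^ p} : Set k[X]))

theorem mkₐ_X_pow_eq_zero_iff {F : k[X]} : π F = 0 ↔ X ^ p ∣ F := by
  rw [Ideal.Quotient.mkₐ_eq_mk, Ideal.Quotient.eq_zero_iff_mem, Ideal.mem_span_singleton]

theorem derivation_mkₐ_apply (d : Derivation k (WittA k p) (WittA k p)) (Q : k[X]) :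
    d (π Q) = π (derivative Q) * d (WittX k p) := by
  have hπ : ∀ R : k[X], π R = aeval (WittX k p) R := fun R => by
    simpa using (aeval_algHom_apply π X R).symm
  rw [hπ, hπ, Derivation.map_aeval, smul_eq_mul]

theorem derivation_ext_WittX {d d' : Derivation k (WittA k p) (WittA k p)}
    (h : d (WittX k p) = d' (WittX k p)) : d = d' := by
  ext a
  obtain ⟨Q, rfl⟩ := Ideal.Quotient.mkₐ_surjective k _ a
  rw [derivation_mkₐ_apply, derivation_mkₐ_apply, h]

theorem lie_apply_WittX (x y : Derivation k (WittA k p) (WittA k p)) {F G : k[X]}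
    (hF : x (WittX k p) = π F) (hG : y (WittX k p) = π G) :
    ⁅x, y⁆ (WittX k p) = π (wronskian F G) := by
  rw [Derivation.commutator_apply, hF, hG, derivation_mkₐ_apply, derivation_mkₐ_apply, hF, hG]
  simp only [wronskian, map_sub, map_mul]
  ring

theorem exists_natDegree_lt_mkₐ_eq (hp : p ≠ 0) (a : WittA k p) :
    ∃ F : k[X], F.natDegree < p ∧ π F = a := by
  obtain ⟨F, rfl⟩ := Ideal.Quotient.mkₐ_surjective k _ a
  refine ⟨F %ₘ X ^ p, ?_, ?_⟩
  · have hX : (X : k[X]) ^ p ≠ 1 := fun h => hp (by simpa using congrArg natDegree h)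
    simpa using natDegree_modByMonic_lt F (monic_X_pow p) hX
  · conv_rhs => rw [← modByMonic_add_div F (X ^ p)]
    rw [map_add, map_mul, mkₐ_X_pow_eq_zero_iff.mpr dvd_rfl, zero_mul, add_zero]

theorem mkₐ_mem_span_WittX_sq_iff (hp : 2 ≤ p) (F : k[X]) :
    π F ∈ Ideal.span {WittX k p ^ 2} ↔ X ^ 2 ∣ F := by
  have hspan : Ideal.span {WittX k p ^ 2} =
      (Ideal.span {X ^ 2}).map (Ideal.Quotient.mk (Ideal.span ({X ^ p} : Set k[X]))) := by
    rw [Ideal.map_span, Set.image_singleton, map_pow]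
  rw [hspan, Ideal.Quotient.mkₐ_eq_mk, Ideal.mem_quotient_iff_mem, Ideal.mem_span_singleton]
  exact Ideal.span_singleton_le_span_singleton.mpr (pow_dvd_pow X hp)

end WittAlgebra

theorem witt_centralizer_in_g1_general (p : ℕ) (hp : p.Prime)
    (k : Type*) [Field k] [CharP k p]
    (x : Derivation k (WittA k p) (WittA k p)) (hx0 : x ≠ 0)
    (hx : x (WittX k p) ∈ Ideal.span {WittX k p ^ 2}) :
    ({y : Derivation k (WittA k p) (WittA k p) | ⁅x, y⁆ = 0} ⊆
      {y : Derivation k (WittA k p) (WittA k p) |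
        y (WittX k p) ∈ Ideal.span {WittX k p ^ 2}}) ∧
    {y : Derivation k (WittA k p) (WittA k p) |
        y (WittX k p) ∈ Ideal.span {WittX k p ^ 2} ∧ ⁅x, y⁆ = 0} =
      {y : Derivation k (WittA k p) (WittA k p) | ⁅x, y⁆ = 0} := by
  obtain ⟨F, hFp, hF⟩ := exists_natDegree_lt_mkₐ_eq hp.ne_zero (x (WittX k p))
  have hF0 : F ≠ 0 := by
    rintro rfl
    exact hx0 (derivation_ext_WittX (by rw [← hF, map_zero]; rfl))
  have hF2 : X ^ 2 ∣ F := (mkₐ_mem_span_WittX_sq_iff hp.two_le F).mp (hF ▸ hx)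
  have hsub : {y : Derivation k (WittA k p) (WittA k p) | ⁅x, y⁆ = 0} ⊆
      {y | y (WittX k p) ∈ Ideal.span {WittX k p ^ 2}} := by
    intro y (hy : ⁅x, y⁆ = 0)
    obtain ⟨G, hG⟩ := Ideal.Quotient.mkₐ_surjective k _ (y (WittX k p))
    rw [Set.mem_ofPred_eq, ← hG, mkₐ_mem_span_WittX_sq_iff hp.two_le]
    refine X_sq_dvd_of_X_pow_dvd_wronskian hF0 hFp hF2 (mkₐ_X_pow_eq_zero_iff.mp ?_)
    rw [← lie_apply_WittX x y hF.symm hG.symm, hy]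
    rfl
  exact ⟨hsub, Set.ext fun y => ⟨And.right, fun hy => ⟨hsub hy, hy⟩⟩⟩

/-- For every nonzero `x ∈ g_1`, the centralizer of `x` in the Witt algebra `g = Der_k(A)` is
contained in `g_1`; consequently the centralizer of `x` in `g_1` coincides with its centralizer
in `g`: `z_{g_1}(x) = z_g(x)`.  Here `g_1 = {d : d(X) ∈ X²·A}`. -/
theorem witt_centralizer_in_g1 (p : ℕ) (hp : p.Prime) (hp3 : 3 < p)
    (k : Type*) [Field k] [IsAlgClosed k] [CharP k p]
    (x : Derivation k (WittA k p) (WittA k p)) (hx0 : x ≠ 0)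
    (hx : x (WittX k p) ∈ Ideal.span {WittX k p ^ 2}) :
    ({y : Derivation k (WittA k p) (WittA k p) | ⁅x, y⁆ = 0} ⊆
      {y : Derivation k (WittA k p) (WittA k p) |
        y (WittX k p) ∈ Ideal.span {WittX k p ^ 2}}) ∧
    {y : Derivation k (WittA k p) (WittA k p) |
        y (WittX k p) ∈ Ideal.span {WittX k p ^ 2} ∧ ⁅x, y⁆ = 0} =
      {y : Derivation k (WittA k p) (WittA k p) | ⁅x, y⁆ = 0} :=
  witt_centralizer_in_g1_general p hp k x hx0 hx
end

section
/- Let B⁻ = span_k{D, XD} ⊆ g, where D and XD are the derivations of A with D(X) = 1 and (XD)(X) = X. Then the set of nilpotent elements of B⁻ is N(B⁻) = k·D; that is, for a, b ∈ k, the derivation a•D + b•XD satisfies (a•D + b•XD)^p = 0 as a k-linear endomorphism of A if and only if b = 0. Consequently, the nilpotent commuting variety of B⁻ satisfies C(N(B⁻)) = N(B⁻) × N(B⁻). -/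
open Polynomial

set_option synthInstance.maxHeartbeats 1000000
set_option maxHeartbeats 1000000

/-!
If `D X = 1` then `D^p (X^n) = n (n-1) ⋯ (n-p+1) X^(n-p)`, which vanishes for `n < p` because
the product has a zero factor, and for `n ≥ p` because `X^n = 0`; so `D^p = 0` in any
characteristic.  The derivation `δ = a•D + b•XD` instead preserves `span{1, X}`, with
`δ X = b X + a`, so `δ^p X = b^p X + a b^(p-1)`; as `1, X` are independent in `A`, this vanishes
only if `b = 0`.  Hence the nilpotent elements of `span{D, XD}` form the line `k·D`, and any two
of them commute.
-/

namespace Derivation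

variable {R A : Type*} [CommRing R] [CommRing A] [Algebra R A]

theorem toLinearMap_pow_apply_pow (D : Derivation R A A) {x : A} (hx : D x = 1) (m n : ℕ) :
    (D.toLinearMap ^ m) (x ^ n) = n.descFactorial m • x ^ (n - m) := by
  induction m with
  | zero => simp
  | succ m ih =>
    rw [pow_succ', Module.End.mul_apply, ih, map_nsmul, coeFn_coe, leibniz_pow, hx, smul_eq_mul,
      mul_one, smul_smul, Nat.sub_sub, Nat.descFactorial_succ, mul_comm]

theorem toLinearMap_pow_eq_zero (D : Derivation R A A) {x : A} (hx : D x = 1) {n : ℕ}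
    (hxn : x ^ n = 0) (hgen : Function.Surjective (aeval x : R[X] →ₐ[R] A)) :
    D.toLinearMap ^ n = 0 := by
  ext a
  obtain ⟨f, rfl⟩ := hgen a
  induction f using Polynomial.induction_on' with
  | add f g hf hg => simp only [map_add, hf, hg, LinearMap.zero_apply, add_zero]
  | monomial m c =>
    rw [aeval_monomial, ← smul_eq_mul, algebraMap_smul, LinearMap.map_smul]
    rcases lt_or_ge m n with hmn | hnm
    · simp [toLinearMap_pow_apply_pow D hx, Nat.descFactorial_eq_zero_iff_lt.mpr hmn]
    · simp [pow_eq_zero_of_le hnm hxn]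

theorem toLinearMap_pow_succ_apply_of_apply_eq (δ : Derivation R A A) {x : A} {a b : R}
    (hδ : δ x = b • x + a • 1) (n : ℕ) :
    (δ.toLinearMap ^ (n + 1)) x = b ^ (n + 1) • x + (a * b ^ n) • 1 := by
  induction n with
  | zero => simpa using hδ
  | succ n ih =>
    rw [pow_succ', Module.End.mul_apply, ih, map_add, LinearMap.map_smul, LinearMap.map_smul,
      coeFn_coe, hδ, map_one_eq_zero, smul_zero, add_zero, smul_add, smul_smul, smul_smul,
      ← pow_succ, mul_comm _ a]

end Derivation

theorem setOf_mem_span_pair_and_eq_range_smul {R M : Type*} [Semiring R] [AddCommMonoid M]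
    [Module R M] {P : M → Prop} {x y : M} (h : ∀ a b : R, P (a • x + b • y) ↔ b = 0) :
    {z | z ∈ Submodule.span R {x, y} ∧ P z} = Set.range (fun a : R => a • x) := by
  ext z
  simp only [Set.mem_ofPred_eq, Set.mem_range, Submodule.mem_span_pair]
  constructor
  · rintro ⟨⟨a, b, rfl⟩, hP⟩
    exact ⟨a, by rw [(h a b).mp hP, zero_smul, add_zero]⟩
  · rintro ⟨a, rfl⟩
    exact ⟨⟨a, 0, by rw [zero_smul, add_zero]⟩, by simpa using (h a 0).mpr rfl⟩

theorem prod_self_eq_setOf_lie_eq_zero {L : Type*} [Bracket L L] [Zero L] {S : Set L}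
    (hS : ∀ x ∈ S, ∀ y ∈ S, ⁅x, y⁆ = 0) :
    S ×ˢ S = {q : L × L | q.1 ∈ S ∧ q.2 ∈ S ∧ ⁅q.1, q.2⁆ = 0} := by
  ext q
  exact ⟨fun ⟨h₁, h₂⟩ => ⟨h₁, h₂, hS _ h₁ _ h₂⟩, fun ⟨h₁, h₂, _⟩ => ⟨h₁, h₂⟩⟩

theorem lie_smul_smul_self {R L : Type*} [CommRing R] [LieRing L] [LieAlgebra R L] (a b : R)
    (x : L) : ⁅a • x, b • x⁆ = 0 := by
  rw [smul_lie, lie_smul, lie_self, smul_zero, smul_zero]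

section WittA

variable {k : Type*} [Field k] {p : ℕ}

theorem wittX_pow : WittX k p ^ p = 0 := by
  rw [← map_pow, Ideal.Quotient.eq_zero_iff_mem]
  exact Ideal.subset_span rfl

theorem aeval_wittX_surjective :
    Function.Surjective (aeval (WittX k p) : k[X] →ₐ[k] WittA k p) := by
  intro a
  obtain ⟨f, rfl⟩ := Ideal.Quotient.mk_surjective a
  refine ⟨f, ?_⟩
  have := aeval_algHom_apply (Ideal.Quotient.mkₐ k (Ideal.span {X ^ p})) (X : k[X]) f
  rwa [aeval_X_left_apply, Ideal.Quotient.mkₐ_eq_mk] at this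

theorem linearIndependent_wittX_one (hp : 1 < p) : LinearIndependent k ![WittX k p, 1] := by
  refine LinearIndependent.pair_iff.mpr fun s t hst => ?_
  have hdvd : X ^ p ∣ C s * X + C t := by
    rw [← Ideal.mem_span_singleton, ← Ideal.Quotient.eq_zero_iff_mem, ← hst, ← algebraMap_eq,
      map_add, map_mul, Ideal.Quotient.mk_algebraMap, Ideal.Quotient.mk_algebraMap,
      ← Algebra.smul_def, Algebra.algebraMap_eq_smul_one]
  have hzero : C s * X + C t = 0 := by
    refine eq_zero_of_dvd_of_degree_lt hdvd (degree_linear_le.trans_lt ?_)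
    rw [degree_X_pow]
    exact_mod_cast hp
  exact ⟨by simpa using congrArg (coeff · 1) hzero, by simpa using congrArg (coeff · 0) hzero⟩

theorem derivation_smul_add_smul_pow_eq_zero_iff (hp : 1 < p)
    {D E : Derivation k (WittA k p) (WittA k p)}
    (hD : D (WittX k p) = 1) (hE : E (WittX k p) = WittX k p) (a b : k) :
    (a • D + b • E).toLinearMap ^ p = 0 ↔ b = 0 := by
  constructor
  · intro h
    have hX := (a • D + b • E).toLinearMap_pow_succ_apply_of_apply_eq (a := a) (b := b)
      (by rw [Derivation.add_apply, Derivation.smul_apply, Derivation.smul_apply, hD, hE, add_comm])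
      (p - 1)
    rw [Nat.sub_add_cancel hp.le, h, LinearMap.zero_apply] at hX
    have hbp := (LinearIndependent.pair_iff.mp (linearIndependent_wittX_one hp) _ _ hX.symm).1
    exact pow_eq_zero_iff (by omega) |>.mp hbp
  · rintro rfl
    rw [zero_smul, add_zero, Derivation.coe_smul_linearMap, _root_.smul_pow,
      D.toLinearMap_pow_eq_zero hD wittX_pow aeval_wittX_surjective, smul_zero]

end WittA

theorem witt_borel_minus_nilpotent_commuting_general (p : ℕ) (hp : p.Prime)
    (k : Type*) [Field k]
    (D E : Derivation k (WittA k p) (WittA k p))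
    (hD : D (WittX k p) = 1) (hE : E (WittX k p) = WittX k p) :
    (∀ a b : k, ((a • D + b • E).toLinearMap ^ p = 0 ↔ b = 0)) ∧
    {x : Derivation k (WittA k p) (WittA k p) |
        x ∈ Submodule.span k ({D, E} : Set (Derivation k (WittA k p) (WittA k p))) ∧
          x.toLinearMap ^ p = 0} =
      Set.range (fun a : k => a • D) ∧
    {q : Derivation k (WittA k p) (WittA k p) × Derivation k (WittA k p) (WittA k p) |
        (q.1 ∈ Submodule.span k ({D, E} : Set (Derivation k (WittA k p) (WittA k p))) ∧
            q.1.toLinearMap ^ p = 0) ∧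
        (q.2 ∈ Submodule.span k ({D, E} : Set (Derivation k (WittA k p) (WittA k p))) ∧
            q.2.toLinearMap ^ p = 0) ∧ ⁅q.1, q.2⁆ = 0} =
      {x : Derivation k (WittA k p) (WittA k p) |
          x ∈ Submodule.span k ({D, E} : Set (Derivation k (WittA k p) (WittA k p))) ∧
            x.toLinearMap ^ p = 0} ×ˢ
        {x : Derivation k (WittA k p) (WittA k p) |
          x ∈ Submodule.span k ({D, E} : Set (Derivation k (WittA k p) (WittA k p))) ∧
            x.toLinearMap ^ p = 0} := by
  have hnil := derivation_smul_add_smul_pow_eq_zero_iff hp.one_lt hD hE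
  have hN := setOf_mem_span_pair_and_eq_range_smul
    (P := fun δ : Derivation k (WittA k p) (WittA k p) => δ.toLinearMap ^ p = 0) hnil
  refine ⟨hnil, hN, Eq.symm ?_⟩
  refine prod_self_eq_setOf_lie_eq_zero ?_
  rw [hN]
  rintro _ ⟨a, rfl⟩ _ ⟨b, rfl⟩
  exact lie_smul_smul_self a b D

/-- Let `B⁻ = span_k{D, XD} ⊆ g = Der_k(A)`, where `D(X) = 1` and `(XD)(X) = X`.  Then
`N(B⁻) = k·D`: for `a, b ∈ k` the derivation `a•D + b•XD` satisfies `(a•D + b•XD)^p = 0`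
iff `b = 0`.  Consequently `C(N(B⁻)) = N(B⁻) × N(B⁻)`. -/
theorem witt_borel_minus_nilpotent_commuting (p : ℕ) (hp : p.Prime) (hp3 : 3 < p)
    (k : Type*) [Field k] [IsAlgClosed k] [CharP k p]
    (D E : Derivation k (WittA k p) (WittA k p))
    (hD : D (WittX k p) = 1) (hE : E (WittX k p) = WittX k p) :
    (∀ a b : k, ((a • D + b • E).toLinearMap ^ p = 0 ↔ b = 0)) ∧
    {x : Derivation k (WittA k p) (WittA k p) |
        x ∈ Submodule.span k ({D, E} : Set (Derivation k (WittA k p) (WittA k p))) ∧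
          x.toLinearMap ^ p = 0} =
      Set.range (fun a : k => a • D) ∧
    {q : Derivation k (WittA k p) (WittA k p) × Derivation k (WittA k p) (WittA k p) |
        (q.1 ∈ Submodule.span k ({D, E} : Set (Derivation k (WittA k p) (WittA k p))) ∧
            q.1.toLinearMap ^ p = 0) ∧
        (q.2 ∈ Submodule.span k ({D, E} : Set (Derivation k (WittA k p) (WittA k p))) ∧
            q.2.toLinearMap ^ p = 0) ∧ ⁅q.1, q.2⁆ = 0} =
      {x : Derivation k (WittA k p) (WittA k p) |
          x ∈ Submodule.span k ({D, E} : Set (Derivation k (WittA k p) (WittA k p))) ∧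
            x.toLinearMap ^ p = 0} ×ˢ
        {x : Derivation k (WittA k p) (WittA k p) |
          x ∈ Submodule.span k ({D, E} : Set (Derivation k (WittA k p) (WittA k p))) ∧
            x.toLinearMap ^ p = 0} :=
  witt_borel_minus_nilpotent_commuting_general p hp k D E hD hE
end
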